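/- Let 0≤n≤m≤N be integers, let f_1∈V_{h,m} satisfy either m=0 or L_m f_1=0, and let f_2∈V_{h,n} satisfy either n=0 or L_n f_2=0. Then ⟨R_{N−1}R_{N−2}⋯R_m f_1, R_{N−1}R_{N−2}⋯R_n f_2⟩_{V_{h,N}} = δ_{n,m} · q^{−(N−n)(N+n+1)/2} (q;q)_{N−n} (A_h q^{2n+h};q)_{N−n} · ⟨f_1,f_2⟩_{V_{h,n}}, where δ_{n,m} is the Kronecker delta (products of consecutive raising operators, the empty product being the identity). -/

import Mathlib

/-!
`R_N` and `-L` are adjoint for these scalar products, and `L R_N - R_{N-1} L` acts on `V_{h,N}`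
as multiplication by a scalar `c_N` (the diagonal terms telescope, the others cancel in pairs).
Hence, if `L f = 0`, then `L R_{n+k} ⋯ R_n f = -ρ_k R_{n+k-1} ⋯ R_n f` with
`-ρ_k = c_n + ⋯ + c_{n+k}`, and `⟨R F, R G⟩ = -⟨F, L R G⟩ = ρ_k ⟨F, G⟩`. Peeling off the raising
operators one by one reduces the scalar product to level `m`; the product of the `ρ_k` is the
stated constant when `n = m`, while for `n < m` what remains is `⟨f₁, R g⟩ = -conj ⟨g, L f₁⟩ = 0`.
-/

open Finset

noncomputable section

/-- q-shifted factorial `(a;q)_m`. -/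
def qPoch (q a : ℝ) (m : ℕ) : ℝ := ∏ k ∈ Finset.range m, (1 - a * q ^ k)

/-- Partial sum `X_k = x_1 + ⋯ + x_k` (entries of index `< k`, 0-indexed). -/
def Xlt {h : ℕ} (x : Fin h → ℕ) (k : ℕ) : ℕ := ∑ j : Fin h, if (j : ℕ) < k then x j else 0

/-- Partial product `A_k = α_1 ⋯ α_k` (entries of index `< k`, 0-indexed). -/
def Apar {h : ℕ} (α : Fin h → ℝ) (k : ℕ) : ℝ := ∏ j : Fin h, if (j : ℕ) < k then α j else 1

/-- Raising operator `R_N : V_{h,N} → V_{h,N+1}`. -/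
def Rop (q : ℝ) {h : ℕ} (N : ℕ) (f : (Fin h → ℕ) → ℂ) : (Fin h → ℕ) → ℂ := fun x =>
  ∑ i : Fin h, (q : ℂ) ^ ((Xlt x i : ℤ) - N - 1) * (1 - (q : ℂ) ^ (x i)) *
    f (Function.update x i (x i - 1))

/-- Lowering operator `L_N : V_{h,N} → V_{h,N-1}` (its defining formula does not involve `N`). -/
def Lop (q : ℝ) {h : ℕ} (α : Fin h → ℝ) (f : (Fin h → ℕ) → ℂ) : (Fin h → ℕ) → ℂ := fun x =>
  ∑ j : Fin h, ((Apar α j : ℝ) : ℂ) * (q : ℂ) ^ ((j : ℕ) + Xlt x j) *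
    ((α j : ℂ) * (q : ℂ) ^ (x j + 1) - 1) * f (Function.update x j (x j + 1))

/-- The multidimensional q-Hahn operator `D_N : V_{h,N} → V_{h,N}`. -/
def Dop (q : ℝ) {h : ℕ} (α : Fin h → ℝ) (N : ℕ) (f : (Fin h → ℕ) → ℂ) : (Fin h → ℕ) → ℂ :=
  fun x =>
    (∑ i : Fin h, ∑ j : Fin h,
      if i ≠ j then
        ((Apar α j : ℝ) : ℂ) *
          (q : ℂ) ^ ((((j : ℕ) + Xlt x j + Xlt x i : ℕ) : ℤ) - N -
            (if (i : ℕ) < (j : ℕ) then 1 else 0)) *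
          ((α j : ℂ) * (q : ℂ) ^ (x j + 1) - 1) * (1 - (q : ℂ) ^ (x i)) *
          f (Function.update (Function.update x j (x j + 1)) i (x i - 1))
      else 0)
    + ((∑ j : Fin h,
          ((Apar α j : ℝ) : ℂ) * (q : ℂ) ^ ((((j : ℕ) + 2 * Xlt x j : ℕ) : ℤ) - N) *
            ((α j : ℂ) * (q : ℂ) ^ (x j) - 1) * (1 - (q : ℂ) ^ (x j)))
        + (((Apar α h : ℝ) : ℂ) * (q : ℂ) ^ (((h + N : ℕ) : ℤ) - 1) - 1) *
            (1 - (q : ℂ) ^ (-(N : ℤ)))) * f x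

/-- Scalar product on `V_{h,N}`. -/
def innerV (q : ℝ) {h : ℕ} (α : Fin h → ℝ) (N : ℕ) (f g : (Fin h → ℕ) → ℂ) : ℂ :=
  (q : ℂ) ^ (N * (N + 1) / 2) *
    ∑ x ∈ Finset.Nat.antidiagonalTuple h N,
      (∏ i : Fin h, ((qPoch q (q * α i) (x i) / qPoch q q (x i) : ℝ) : ℂ) *
        ((α i * q : ℝ) : ℂ) ^ ((N : ℤ) - Xlt x ((i : ℕ) + 1))) *
      f x * (starRingEnd ℂ) (g x)

/-- `RopIter q n k f = R_{n+k-1} ⋯ R_{n+1} R_n f`. -/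
def RopIter (q : ℝ) {h : ℕ} (n : ℕ) : ℕ → ((Fin h → ℕ) → ℂ) → ((Fin h → ℕ) → ℂ)
  | 0, f => f
  | k + 1, f => Rop q (n + k) (RopIter q n k f)

lemma qPoch_succ (q a : ℝ) (n : ℕ) : qPoch q a (n + 1) = qPoch q a n * (1 - a * q ^ n) :=
  Finset.prod_range_succ _ n

lemma qPoch_div_qPoch_succ_mul {q : ℝ} (a : ℝ) {n : ℕ} (hq : q ^ (n + 1) ≠ 1) :
    qPoch q (q * a) (n + 1) / qPoch q q (n + 1) * (1 - q ^ (n + 1)) =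
      qPoch q (q * a) n / qPoch q q n * (1 - a * q ^ (n + 1)) := by
  have hsucc : 1 - q * q ^ n ≠ 0 := by rw [← pow_succ']; exact sub_ne_zero.2 hq.symm
  rw [qPoch_succ, qPoch_succ]
  by_cases h0 : qPoch q q n = 0
  · simp [h0]
  · field_simp
    ring

@[to_additive]
lemma prod_ite_val_lt_succ {M : Type*} [CommMonoid M] {h k : ℕ} (g : Fin h → M) (hk : k < h) :
    (∏ j : Fin h, if (j : ℕ) < k + 1 then g j else 1) =
      (∏ j : Fin h, if (j : ℕ) < k then g j else 1) * g ⟨k, hk⟩ := by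
  rw [← Fintype.prod_ite_eq' (⟨k, hk⟩ : Fin h) g, ← Finset.prod_mul_distrib]
  refine Finset.prod_congr rfl fun j _ => ?_
  rcases lt_trichotomy (j : ℕ) k with hj | hj | hj
  · simp [hj, Nat.lt_succ_of_lt hj, Fin.ext_iff, hj.ne]
  · simp [hj, Fin.ext_iff]
  · simp [hj.ne', Fin.ext_iff, not_lt.2 hj.le, not_lt.2 (Nat.succ_le_of_lt hj)]

section Partial

variable {h : ℕ}

lemma Xlt_zero (x : Fin h → ℕ) : Xlt x 0 = 0 := by simp [Xlt]

lemma Xlt_top (x : Fin h → ℕ) : Xlt x h = ∑ i, x i := by simp [Xlt]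

lemma Xlt_succ (x : Fin h → ℕ) {k : ℕ} (hk : k < h) : Xlt x (k + 1) = Xlt x k + x ⟨k, hk⟩ :=
  sum_ite_val_lt_succ x hk

lemma Apar_zero (α : Fin h → ℝ) : Apar α 0 = 1 := by simp [Apar]

lemma Apar_succ (α : Fin h → ℝ) {k : ℕ} (hk : k < h) : Apar α (k + 1) = Apar α k * α ⟨k, hk⟩ :=
  prod_ite_val_lt_succ α hk

lemma Apar_mul_pow_eq_prod (α : Fin h → ℝ) (q : ℝ) (i : Fin h) :
    Apar α i * q ^ (i : ℕ) = ∏ k : Fin h, if (k : ℕ) < i then α k * q else 1 := by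
  have hq : q ^ (i : ℕ) = ∏ k : Fin h, if (k : ℕ) < i then q else 1 := by
    rw [← Finset.prod_filter, Finset.prod_const, Fin.card_filter_val_lt, min_eq_right i.is_lt.le]
  rw [Apar, hq, ← Finset.prod_mul_distrib]
  refine Finset.prod_congr rfl fun k _ => ?_
  split_ifs <;> simp

lemma Xlt_update (x : Fin h → ℕ) (i : Fin h) (v k : ℕ) :
    (Xlt (Function.update x i v) k : ℤ) = Xlt x k + if (i : ℕ) < k then (v : ℤ) - x i else 0 := by
  simp only [Xlt, ← Finset.sum_filter]
  split_ifs with hi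
  · have hmem : i ∈ univ.filter (fun j : Fin h => (j : ℕ) < k) := by simpa using hi
    rw [Finset.sum_update_of_mem hmem, Finset.sum_eq_add_sum_sdiff_singleton_of_mem hmem x]
    push_cast
    ring
  · have hmem : i ∉ univ.filter (fun j : Fin h => (j : ℕ) < k) := by simpa using hi
    rw [Finset.sum_update_of_notMem hmem, add_zero]

lemma Xlt_update_self (x : Fin h → ℕ) (i : Fin h) (v : ℕ) :
    Xlt (Function.update x i v) i = Xlt x i := by
  have := Xlt_update x i v i
  simp only [lt_self_iff_false, if_false, add_zero] at this
  exact_mod_cast this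

lemma sum_update_add (x : Fin h → ℕ) (i : Fin h) (v : ℕ) :
    (∑ l, Function.update x i v l) + x i = (∑ l, x l) + v := by
  rw [Finset.sum_update_of_mem (mem_univ i),
    Finset.sum_eq_add_sum_sdiff_singleton_of_mem (mem_univ i) x]
  ring

lemma sum_antidiagonalTuple_succ {M : Type*} [AddCommMonoid M] (N : ℕ) (i : Fin h)
    (F : (Fin h → ℕ) → M) (hF : ∀ x, x i = 0 → F x = 0) :
    ∑ x ∈ Finset.Nat.antidiagonalTuple h (N + 1), F x =
      ∑ y ∈ Finset.Nat.antidiagonalTuple h N, F (Function.update y i (y i + 1)) := by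
  have hinj : ∀ y ∈ Finset.Nat.antidiagonalTuple h N, ∀ z ∈ Finset.Nat.antidiagonalTuple h N,
      Function.update y i (y i + 1) = Function.update z i (z i + 1) → y = z := by
    intro y _ z _ hyz
    funext l
    have := congr_fun hyz l
    by_cases hl : l = i
    · subst hl
      simpa using this
    · simpa [hl] using this
  rw [← Finset.sum_image hinj]
  refine (Finset.sum_subset (fun x hx => ?_) fun x hx hx' => ?_).symm
  · obtain ⟨y, hy, rfl⟩ := Finset.mem_image.1 hx
    rw [Finset.Nat.mem_antidiagonalTuple] at hy ⊢
    have := sum_update_add y i (y i + 1)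
    omega
  · refine hF x (by_contra fun hxi =>
      hx' (Finset.mem_image.2 ⟨Function.update x i (x i - 1), ?_, ?_⟩))
    · rw [Finset.Nat.mem_antidiagonalTuple] at hx ⊢
      have := sum_update_add x i (x i - 1)
      omega
    · simp only [Function.update_self, Function.update_idem]
      rw [Nat.sub_add_cancel (Nat.pos_of_ne_zero hxi), Function.update_eq_self]

end Partial

def weight (q : ℝ) {h : ℕ} (α : Fin h → ℝ) (N : ℕ) (x : Fin h → ℕ) : ℂ :=
  ∏ i : Fin h, ((qPoch q (q * α i) (x i) / qPoch q q (x i) : ℝ) : ℂ) *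
    ((α i * q : ℝ) : ℂ) ^ ((N : ℤ) - Xlt x ((i : ℕ) + 1))

def raiseCoef (q : ℝ) {h : ℕ} (N : ℕ) (x : Fin h → ℕ) (i : Fin h) : ℂ :=
  (q : ℂ) ^ ((Xlt x i : ℤ) - N - 1) * (1 - (q : ℂ) ^ (x i))

def lowerCoef (q : ℝ) {h : ℕ} (α : Fin h → ℝ) (x : Fin h → ℕ) (j : Fin h) : ℂ :=
  ((Apar α j : ℝ) : ℂ) * (q : ℂ) ^ ((j : ℕ) + Xlt x j) * ((α j : ℂ) * (q : ℂ) ^ (x j + 1) - 1)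

section Operators

variable {q : ℝ} {h : ℕ} {α : Fin h → ℝ}

lemma innerV_eq_sum (N : ℕ) (f g : (Fin h → ℕ) → ℂ) :
    innerV q α N f g = (q : ℂ) ^ (N * (N + 1) / 2) *
      ∑ x ∈ Finset.Nat.antidiagonalTuple h N, weight q α N x * f x * starRingEnd ℂ (g x) :=
  rfl

lemma innerV_congr {N : ℕ} {f f' g g' : (Fin h → ℕ) → ℂ}
    (hf : ∀ x : Fin h → ℕ, ∑ l, x l = N → f x = f' x)
    (hg : ∀ x : Fin h → ℕ, ∑ l, x l = N → g x = g' x) :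
    innerV q α N f g = innerV q α N f' g' := by
  rw [innerV_eq_sum, innerV_eq_sum]
  congr 1
  refine Finset.sum_congr rfl fun x hx => ?_
  rw [Finset.Nat.mem_antidiagonalTuple] at hx
  rw [hf x hx, hg x hx]

lemma conj_innerV (N : ℕ) (f g : (Fin h → ℕ) → ℂ) :
    starRingEnd ℂ (innerV q α N g f) = innerV q α N f g := by
  simp only [innerV, map_mul, map_sum, map_pow, map_prod, Complex.conj_conj, Complex.conj_ofReal,
    map_zpow₀]
  congr 1
  exact Finset.sum_congr rfl fun x _ => by ring

lemma innerV_ofReal_mul_right (N : ℕ) (c : ℝ) (f g : (Fin h → ℕ) → ℂ) :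
    innerV q α N f (fun x => c * g x) = c * innerV q α N f g := by
  simp only [innerV_eq_sum, map_mul, Complex.conj_ofReal, Finset.mul_sum]
  exact Finset.sum_congr rfl fun x _ => by ring

lemma Rop_apply (N : ℕ) (f : (Fin h → ℕ) → ℂ) (x : Fin h → ℕ) :
    Rop q N f x = ∑ i, raiseCoef q N x i * f (Function.update x i (x i - 1)) :=
  rfl

lemma Lop_apply (f : (Fin h → ℕ) → ℂ) (x : Fin h → ℕ) :
    Lop q α f x = ∑ j, lowerCoef q α x j * f (Function.update x j (x j + 1)) :=
  rfl

lemma raiseCoef_of_eq_zero {N : ℕ} {x : Fin h → ℕ} {i : Fin h} (hx : x i = 0) :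
    raiseCoef q N x i = 0 := by
  simp [raiseCoef, hx]

lemma conj_lowerCoef (x : Fin h → ℕ) (j : Fin h) :
    starRingEnd ℂ (lowerCoef q α x j) = lowerCoef q α x j := by
  simp [lowerCoef]

lemma prod_qPoch_div_update_succ_mul (hq0 : 0 < q) (hq1 : q < 1) (y : Fin h → ℕ) (i : Fin h) :
    (∏ k, ((qPoch q (q * α k) (Function.update y i (y i + 1) k) /
        qPoch q q (Function.update y i (y i + 1) k) : ℝ) : ℂ)) * (1 - (q : ℂ) ^ (y i + 1)) =
      (∏ k, ((qPoch q (q * α k) (y k) / qPoch q q (y k) : ℝ) : ℂ)) *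
        (1 - (α i : ℂ) * (q : ℂ) ^ (y i + 1)) := by
  have hrest : ∏ k ∈ univ.erase i, ((qPoch q (q * α k) (Function.update y i (y i + 1) k) /
        qPoch q q (Function.update y i (y i + 1) k) : ℝ) : ℂ) =
      ∏ k ∈ univ.erase i, ((qPoch q (q * α k) (y k) / qPoch q q (y k) : ℝ) : ℂ) :=
    Finset.prod_congr rfl fun k hk => by rw [Function.update_of_ne (Finset.ne_of_mem_erase hk)]
  have hi : ((qPoch q (q * α i) (y i + 1) / qPoch q q (y i + 1) : ℝ) : ℂ) *
        (1 - (q : ℂ) ^ (y i + 1)) =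
      ((qPoch q (q * α i) (y i) / qPoch q q (y i) : ℝ) : ℂ) *
        (1 - (α i : ℂ) * (q : ℂ) ^ (y i + 1)) := by
    exact_mod_cast qPoch_div_qPoch_succ_mul (α i) (pow_lt_one₀ hq0.le hq1 (y i).succ_ne_zero).ne
  rw [← Finset.mul_prod_erase _ _ (mem_univ i), ← Finset.mul_prod_erase _ _ (mem_univ i), hrest,
    Function.update_self]
  linear_combination (∏ k ∈ univ.erase i,
    ((qPoch q (q * α k) (y k) / qPoch q q (y k) : ℝ) : ℂ)) * hi

lemma prod_zpow_update_succ (hq : q ≠ 0) (hα : ∀ i, α i ≠ 0) (N : ℕ) (y : Fin h → ℕ)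
    (i : Fin h) :
    ∏ k : Fin h, ((α k * q : ℝ) : ℂ) ^
        (((N + 1 : ℕ) : ℤ) - Xlt (Function.update y i (y i + 1)) ((k : ℕ) + 1)) =
      (∏ k : Fin h, ((α k * q : ℝ) : ℂ) ^ ((N : ℤ) - Xlt y ((k : ℕ) + 1))) *
        (((Apar α i : ℝ) : ℂ) * (q : ℂ) ^ (i : ℕ)) := by
  have hA : ((Apar α i : ℝ) : ℂ) * (q : ℂ) ^ (i : ℕ) =
      ∏ k : Fin h, if (k : ℕ) < i then ((α k * q : ℝ) : ℂ) else 1 := by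
    have := congrArg (fun t : ℝ => (t : ℂ)) (Apar_mul_pow_eq_prod α q i)
    push_cast [apply_ite] at this ⊢
    exact this
  rw [hA, ← Finset.prod_mul_distrib]
  refine Finset.prod_congr rfl fun k _ => ?_
  have hne : ((α k * q : ℝ) : ℂ) ≠ 0 := by exact_mod_cast mul_ne_zero (hα k) hq
  rw [Xlt_update]
  by_cases hki : (k : ℕ) < i
  · rw [if_neg (by omega), if_pos hki, ← zpow_add_one₀ hne]
    congr 1
    push_cast
    ring
  · rw [if_pos (by omega), if_neg hki, mul_one]
    congr 1
    push_cast
    ring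

lemma weight_update_succ_mul (hq0 : 0 < q) (hq1 : q < 1) (hα : ∀ i, α i ≠ 0) (N : ℕ)
    (y : Fin h → ℕ) (i : Fin h) :
    weight q α (N + 1) (Function.update y i (y i + 1)) * (1 - (q : ℂ) ^ (y i + 1)) =
      weight q α N y * (1 - (α i : ℂ) * (q : ℂ) ^ (y i + 1)) *
        (((Apar α i : ℝ) : ℂ) * (q : ℂ) ^ (i : ℕ)) := by
  rw [weight, weight, Finset.prod_mul_distrib, Finset.prod_mul_distrib,
    prod_zpow_update_succ hq0.ne' hα, mul_right_comm, prod_qPoch_div_update_succ_mul hq0 hq1]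
  ring

lemma weight_mul_raiseCoef_update_succ (hq0 : 0 < q) (hq1 : q < 1) (hα : ∀ i, α i ≠ 0)
    (N : ℕ) (y : Fin h → ℕ) (i : Fin h) :
    (q : ℂ) ^ ((N + 1) * (N + 1 + 1) / 2) * weight q α (N + 1) (Function.update y i (y i + 1)) *
        raiseCoef q N (Function.update y i (y i + 1)) i =
      -((q : ℂ) ^ (N * (N + 1) / 2) * weight q α N y * lowerCoef q α y i) := by
  have hq : (q : ℂ) ≠ 0 := by exact_mod_cast hq0.ne'
  have htri : (N + 1) * (N + 1 + 1) / 2 = N * (N + 1) / 2 + (N + 1) := by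
    have : (N + 1) * (N + 1 + 1) = N * (N + 1) + 2 * (N + 1) := by ring
    omega
  have hpow : (q : ℂ) ^ (N + 1) * (q : ℂ) ^ (i : ℕ) * (q : ℂ) ^ ((Xlt y i : ℤ) - N - 1) =
      (q : ℂ) ^ ((i : ℕ) + Xlt y i) := by
    rw [← zpow_natCast, ← zpow_natCast, ← zpow_natCast, ← zpow_add₀ hq, ← zpow_add₀ hq]
    congr 1
    push_cast
    ring
  rw [raiseCoef, lowerCoef, Xlt_update_self, Function.update_self, htri, pow_add]
  linear_combination
    ((q : ℂ) ^ (N * (N + 1) / 2) * (q : ℂ) ^ (N + 1) * (q : ℂ) ^ ((Xlt y i : ℤ) - N - 1)) *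
      weight_update_succ_mul hq0 hq1 hα N y i +
    ((q : ℂ) ^ (N * (N + 1) / 2) * weight q α N y * (1 - (α i : ℂ) * (q : ℂ) ^ (y i + 1)) *
      ((Apar α i : ℝ) : ℂ)) * hpow

lemma innerV_Rop (hq0 : 0 < q) (hq1 : q < 1) (hα : ∀ i, α i ≠ 0) (N : ℕ)
    (f g : (Fin h → ℕ) → ℂ) :
    innerV q α (N + 1) (Rop q N f) g = -innerV q α N f (Lop q α g) := by
  have hshift : ∀ i : Fin h,
      ∑ x ∈ Finset.Nat.antidiagonalTuple h (N + 1), (q : ℂ) ^ ((N + 1) * (N + 1 + 1) / 2) *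
          weight q α (N + 1) x * raiseCoef q N x i * f (Function.update x i (x i - 1)) *
          starRingEnd ℂ (g x) =
        ∑ y ∈ Finset.Nat.antidiagonalTuple h N,
          -((q : ℂ) ^ (N * (N + 1) / 2) * weight q α N y * lowerCoef q α y i) * f y *
            starRingEnd ℂ (g (Function.update y i (y i + 1))) := by
    intro i
    rw [sum_antidiagonalTuple_succ N i _ fun x hx => by simp [raiseCoef_of_eq_zero hx]]
    refine Finset.sum_congr rfl fun y _ => ?_
    rw [← weight_mul_raiseCoef_update_succ hq0 hq1 hα, Function.update_self, Nat.add_sub_cancel,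
      Function.update_idem, Function.update_eq_self]
  calc innerV q α (N + 1) (Rop q N f) g
      = ∑ i, ∑ x ∈ Finset.Nat.antidiagonalTuple h (N + 1),
          (q : ℂ) ^ ((N + 1) * (N + 1 + 1) / 2) * weight q α (N + 1) x * raiseCoef q N x i *
            f (Function.update x i (x i - 1)) * starRingEnd ℂ (g x) := by
        rw [innerV_eq_sum, Finset.mul_sum, Finset.sum_comm]
        refine Finset.sum_congr rfl fun x _ => ?_
        simp only [Rop_apply, Finset.mul_sum, Finset.sum_mul]
        exact Finset.sum_congr rfl fun i _ => by ring
    _ = ∑ i, ∑ y ∈ Finset.Nat.antidiagonalTuple h N,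
          -((q : ℂ) ^ (N * (N + 1) / 2) * weight q α N y * lowerCoef q α y i) * f y *
            starRingEnd ℂ (g (Function.update y i (y i + 1))) :=
        Finset.sum_congr rfl fun i _ => hshift i
    _ = -innerV q α N f (Lop q α g) := by
        rw [innerV_eq_sum, Finset.sum_comm, Finset.mul_sum, ← Finset.sum_neg_distrib]
        refine Finset.sum_congr rfl fun y _ => ?_
        simp only [Lop_apply, map_sum, map_mul, conj_lowerCoef, Finset.mul_sum,
          ← Finset.sum_neg_distrib]
        exact Finset.sum_congr rfl fun i _ => by ring

end Operators

def commConst (q : ℝ) {h : ℕ} (α : Fin h → ℝ) (N : ℕ) : ℝ :=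
  (1 - q) * (Apar α h * q ^ (2 * N + h) - 1) / q ^ (N + 1)

/-- The diagonal terms of `L R_N - R_{N-1} L` at `x` are the increments of this sequence. -/
def commPotential (q : ℝ) {h : ℕ} (α : Fin h → ℝ) (N : ℕ) (x : Fin h → ℕ) (t : ℕ) : ℂ :=
  (1 - (q : ℂ)) * ((Apar α t : ℝ) : ℂ) * (q : ℂ) ^ ((t : ℤ) + 2 * Xlt x t - N - 1)

section Commutation

variable {q : ℝ} {h : ℕ} {α : Fin h → ℝ}

lemma sum_commPotential_sub (hq : q ≠ 0) {N : ℕ} {x : Fin h → ℕ} (hx : ∑ l, x l = N) :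
    ∑ j : Fin h, (commPotential q α N x (j + 1) - commPotential q α N x j) =
      (commConst q α N : ℂ) := by
  have hq' : (q : ℂ) ≠ 0 := by exact_mod_cast hq
  rw [Fin.sum_univ_eq_sum_range (fun t => commPotential q α N x (t + 1) - commPotential q α N x t),
    Finset.sum_range_sub, commPotential, commPotential, Apar_zero, Xlt_zero, Xlt_top, hx,
    commConst]
  rw [show (h : ℤ) + 2 * (N : ℤ) - N - 1 = ((h + 2 * N : ℕ) : ℤ) - ((N + 1 : ℕ) : ℤ) by
      push_cast; ring,
    show ((0 : ℕ) : ℤ) + 2 * ((0 : ℕ) : ℤ) - N - 1 = -((N + 1 : ℕ) : ℤ) by push_cast; ring,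
    zpow_sub₀ hq', zpow_neg, zpow_natCast, zpow_natCast]
  push_cast
  field_simp
  ring

lemma lowerCoef_mul_raiseCoef_of_ne (hq : q ≠ 0) {N : ℕ} {x : Fin h → ℕ} (hx : ∑ l, x l = N)
    {i j : Fin h} (hij : i ≠ j) :
    lowerCoef q α x j * raiseCoef q N (Function.update x j (x j + 1)) i =
      raiseCoef q (N - 1) x i * lowerCoef q α (Function.update x i (x i - 1)) j := by
  have hq' : (q : ℂ) ≠ 0 := by exact_mod_cast hq
  rcases Nat.eq_zero_or_pos (x i) with h0 | hpos
  · rw [raiseCoef_of_eq_zero (by rw [Function.update_of_ne hij, h0]), raiseCoef_of_eq_zero h0,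
      mul_zero, zero_mul]
  have hN : x i ≤ N := hx ▸ Finset.single_le_sum (fun l _ => Nat.zero_le (x l)) (mem_univ i)
  have hval : (i : ℕ) ≠ j := Fin.val_ne_of_ne hij
  have hpow : (q : ℂ) ^ ((j : ℕ) + Xlt x j) *
        (q : ℂ) ^ ((Xlt (Function.update x j (x j + 1)) i : ℤ) - N - 1) =
      (q : ℂ) ^ ((Xlt x i : ℤ) - ((N - 1 : ℕ) : ℤ) - 1) *
        (q : ℂ) ^ ((j : ℕ) + Xlt (Function.update x i (x i - 1)) j) := by
    rw [← zpow_natCast, ← zpow_natCast, ← zpow_add₀ hq', ← zpow_add₀ hq']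
    congr 1
    push_cast
    rw [Xlt_update, Xlt_update]
    split_ifs <;> omega
  simp only [raiseCoef, lowerCoef, Function.update_of_ne hij, Function.update_of_ne hij.symm]
  linear_combination (((Apar α j : ℝ) : ℂ) * ((α j : ℂ) * (q : ℂ) ^ (x j + 1) - 1) *
    (1 - (q : ℂ) ^ x i)) * hpow

lemma lowerCoef_mul_raiseCoef_self (hq : q ≠ 0) {N : ℕ} {x : Fin h → ℕ} (hx : ∑ l, x l = N)
    (j : Fin h) :
    lowerCoef q α x j * raiseCoef q N (Function.update x j (x j + 1)) j =
      raiseCoef q (N - 1) x j * lowerCoef q α (Function.update x j (x j - 1)) j +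
        (commPotential q α N x (j + 1) - commPotential q α N x j) := by
  have hq' : (q : ℂ) ≠ 0 := by exact_mod_cast hq
  have hN : x j ≤ N := hx ▸ Finset.single_le_sum (fun l _ => Nat.zero_le (x l)) (mem_univ j)
  simp only [raiseCoef, lowerCoef, commPotential, Xlt_update_self, Function.update_self,
    Xlt_succ x j.is_lt, Apar_succ α j.is_lt, Fin.eta]
  rcases Nat.eq_zero_or_pos (x j) with h0 | hpos
  · simp only [h0, pow_zero, sub_self, mul_zero, zero_add, add_zero]
    simp only [two_mul, sub_eq_add_neg, zpow_add₀ hq', zpow_neg, zpow_one,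
      zpow_natCast, pow_add, Nat.cast_add, Nat.cast_one]
    push_cast
    field_simp
    ring
  · obtain ⟨s, hs⟩ : ∃ s, x j = s + 1 := ⟨x j - 1, by omega⟩
    rw [show ((N - 1 : ℕ) : ℤ) = (N : ℤ) - 1 by omega, hs, Nat.add_sub_cancel]
    simp only [two_mul, sub_eq_add_neg, neg_add, neg_neg, zpow_add₀ hq', zpow_neg, zpow_one,
      zpow_natCast, pow_add, Nat.cast_add, Nat.cast_one]
    push_cast
    field_simp
    ring

/-- For `N = 0` the truncated `N - 1` is harmless: then `x = 0` and every `raiseCoef` vanishes. -/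
lemma Lop_Rop (hq : q ≠ 0) (f : (Fin h → ℕ) → ℂ) {N : ℕ} {x : Fin h → ℕ}
    (hx : ∑ l, x l = N) :
    Lop q α (Rop q N f) x = Rop q (N - 1) (Lop q α f) x + (commConst q α N : ℂ) * f x := by
  have hterm : ∀ j i : Fin h,
      lowerCoef q α x j * (raiseCoef q N (Function.update x j (x j + 1)) i *
        f (Function.update (Function.update x j (x j + 1)) i
          (Function.update x j (x j + 1) i - 1))) =
      raiseCoef q (N - 1) x i * (lowerCoef q α (Function.update x i (x i - 1)) j *
        f (Function.update (Function.update x i (x i - 1)) j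
          (Function.update x i (x i - 1) j + 1))) +
      if i = j then (commPotential q α N x (j + 1) - commPotential q α N x j) * f x else 0 := by
    intro j i
    rcases eq_or_ne i j with rfl | hij
    · rw [if_pos rfl, ← mul_assoc, ← mul_assoc, lowerCoef_mul_raiseCoef_self hq hx]
      simp only [Function.update_self, Function.update_idem, Nat.add_sub_cancel,
        Function.update_eq_self]
      rcases Nat.eq_zero_or_pos (x i) with h0 | hpos
      · rw [raiseCoef_of_eq_zero h0]
        ring
      · rw [Nat.sub_add_cancel hpos, Function.update_eq_self]
        ring
    · rw [if_neg hij, add_zero, ← mul_assoc, ← mul_assoc, lowerCoef_mul_raiseCoef_of_ne hq hx hij,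
        Function.update_of_ne hij, Function.update_of_ne hij.symm, Function.update_comm hij.symm]
  calc Lop q α (Rop q N f) x
      = ∑ j, ∑ i, lowerCoef q α x j * (raiseCoef q N (Function.update x j (x j + 1)) i *
          f (Function.update (Function.update x j (x j + 1)) i
            (Function.update x j (x j + 1) i - 1))) := by
        simp only [Lop_apply, Rop_apply, Finset.mul_sum]
    _ = Rop q (N - 1) (Lop q α f) x + (commConst q α N : ℂ) * f x := by
        simp only [hterm, Finset.sum_add_distrib, Finset.sum_ite_eq', mem_univ, if_true]
        rw [← Finset.sum_mul, sum_commPotential_sub hq hx, Finset.sum_comm]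
        simp only [Lop_apply, Rop_apply, Finset.mul_sum]

end Commutation

/-- The factor by which `R_{n+k}` scales scalar products with `R_{n+k-1} ⋯ R_n f`
when `L f = 0`; its negative is `commConst q α n + ⋯ + commConst q α (n + k)`. -/
def normFactor (q : ℝ) {h : ℕ} (α : Fin h → ℝ) (n k : ℕ) : ℝ :=
  (1 - q ^ (k + 1)) * (1 - Apar α h * q ^ (2 * n + h + k)) / q ^ (n + k + 1)

section Iteration

variable {q : ℝ} {h : ℕ} {α : Fin h → ℝ}

lemma normFactor_zero (hq : q ≠ 0) (n : ℕ) : normFactor q α n 0 = -commConst q α n := by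
  rw [normFactor, commConst]
  field_simp
  ring

lemma normFactor_succ (hq : q ≠ 0) (n k : ℕ) :
    normFactor q α n (k + 1) = normFactor q α n k - commConst q α (n + (k + 1)) := by
  rw [normFactor, normFactor, commConst]
  field_simp
  ring

lemma prod_normFactor (hq : q ≠ 0) (n k : ℕ) :
    ∏ j ∈ range k, normFactor q α n j =
      (q ^ (k * (2 * n + k + 1) / 2))⁻¹ * qPoch q q k * qPoch q (Apar α h * q ^ (2 * n + h)) k := by
  induction k with
  | zero => simp [qPoch]
  | succ k ih =>
    have hexp : (k + 1) * (2 * n + (k + 1) + 1) / 2 = k * (2 * n + k + 1) / 2 + (n + k + 1) := by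
      have : (k + 1) * (2 * n + (k + 1) + 1) = k * (2 * n + k + 1) + 2 * (n + k + 1) := by ring
      omega
    rw [Finset.prod_range_succ, ih, hexp, qPoch_succ, qPoch_succ, normFactor, pow_add]
    field_simp
    ring

lemma Rop_apply_congr {M : ℕ} {g g' : (Fin h → ℕ) → ℂ}
    (hg : ∀ y : Fin h → ℕ, (∑ l, y l) + 1 = M → g y = g' y) (N : ℕ) {x : Fin h → ℕ}
    (hx : ∑ l, x l = M) :
    Rop q N g x = Rop q N g' x := by
  rw [Rop_apply, Rop_apply]
  refine Finset.sum_congr rfl fun i _ => ?_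
  rcases Nat.eq_zero_or_pos (x i) with h0 | hpos
  · rw [raiseCoef_of_eq_zero h0, zero_mul, zero_mul]
  · rw [hg _ (by have := sum_update_add x i (x i - 1); omega)]

lemma Rop_const_mul (c : ℂ) (N : ℕ) (g : (Fin h → ℕ) → ℂ) (x : Fin h → ℕ) :
    Rop q N (fun y => c * g y) x = c * Rop q N g x := by
  simp only [Rop_apply, Finset.mul_sum]
  exact Finset.sum_congr rfl fun i _ => by ring

lemma Lop_RopIter_succ (hq : q ≠ 0) {n : ℕ} {f : (Fin h → ℕ) → ℂ}
    (hf : ∀ y : Fin h → ℕ, (∑ l, y l) + 1 = n → Lop q α f y = 0) (k : ℕ) {x : Fin h → ℕ}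
    (hx : ∑ l, x l = n + k) :
    Lop q α (RopIter q n (k + 1) f) x = -(normFactor q α n k : ℂ) * RopIter q n k f x := by
  induction k generalizing x with
  | zero =>
    rw [add_zero] at hx
    change Lop q α (Rop q n f) x = _
    rw [Lop_Rop hq f hx, Rop_apply_congr (g' := fun _ => 0) hf _ hx, normFactor_zero hq]
    simp [Rop_apply, RopIter]
  | succ k ih =>
    change Lop q α (Rop q (n + (k + 1)) (RopIter q n (k + 1) f)) x = _
    rw [Lop_Rop hq _ hx, Rop_apply_congr (fun y hy => ih (by omega)) _ hx, Rop_const_mul,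
      show n + (k + 1) - 1 = n + k by omega, normFactor_succ hq]
    change _ * RopIter q n (k + 1) f x + _ = _
    push_cast
    ring

end Iteration

section InnerProduct

variable {q : ℝ} {h : ℕ} {α : Fin h → ℝ}

lemma innerV_Rop_Rop (hq0 : 0 < q) (hq1 : q < 1) (hα : ∀ i, α i ≠ 0) {N : ℕ} {ρ : ℝ}
    (F G : (Fin h → ℕ) → ℂ)
    (hG : ∀ x : Fin h → ℕ, ∑ l, x l = N → Lop q α (Rop q N G) x = -(ρ : ℂ) * G x) :
    innerV q α (N + 1) (Rop q N F) (Rop q N G) = ρ * innerV q α N F G := by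
  rw [innerV_Rop hq0 hq1 hα, innerV_congr (g' := fun x => ((-ρ : ℝ) : ℂ) * G x)
    (fun _ _ => rfl) fun x hx => by rw [hG x hx]; push_cast; ring, innerV_ofReal_mul_right]
  push_cast
  ring

lemma innerV_Rop_right_eq_zero (hq0 : 0 < q) (hq1 : q < 1) (hα : ∀ i, α i ≠ 0) {N : ℕ}
    {f : (Fin h → ℕ) → ℂ} (hf : ∀ y : Fin h → ℕ, (∑ l, y l) + 1 = N + 1 → Lop q α f y = 0)
    (G : (Fin h → ℕ) → ℂ) :
    innerV q α (N + 1) f (Rop q N G) = 0 := by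
  rw [← conj_innerV, innerV_Rop hq0 hq1 hα,
    innerV_congr (g' := fun _ => 0) (fun _ _ => rfl) fun y hy => hf y (by omega)]
  simp [innerV_eq_sum]

lemma innerV_RopIter_RopIter (hq0 : 0 < q) (hq1 : q < 1) (hα : ∀ i, α i ≠ 0) {n : ℕ}
    {f : (Fin h → ℕ) → ℂ} (hf : ∀ y : Fin h → ℕ, (∑ l, y l) + 1 = n → Lop q α f y = 0)
    (F : (Fin h → ℕ) → ℂ) (d k : ℕ) :
    innerV q α (n + d + k) (RopIter q (n + d) k F) (RopIter q n (d + k) f) =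
      (∏ j ∈ range k, (normFactor q α n (d + j) : ℂ)) * innerV q α (n + d) F (RopIter q n d f) := by
  induction k with
  | zero => simp [RopIter]
  | succ k ih =>
    have hassoc : n + (d + k) = n + d + k := (add_assoc n d k).symm
    change innerV q α (n + d + k + 1) (Rop q (n + d + k) (RopIter q (n + d) k F))
      (Rop q (n + (d + k)) (RopIter q n (d + k) f)) = _
    rw [hassoc, innerV_Rop_Rop hq0 hq1 hα _ _ fun x hx => ?_, ih, Finset.prod_range_succ]
    · ring
    · rw [← hassoc]
      exact Lop_RopIter_succ hq0.ne' hf (d + k) (by omega)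

end InnerProduct

theorem stmt5_general (q : ℝ) (hq0 : 0 < q) (hq1 : q < 1) (h : ℕ)
    (α : Fin h → ℝ) (hα : ∀ i, 0 < α i) (n m N : ℕ) (hnm : n ≤ m) (hmN : m ≤ N)
    (f₁ f₂ : (Fin h → ℕ) → ℂ)
    (h₁ : m = 0 ∨ ∀ x : Fin h → ℕ, (∑ i, x i) + 1 = m → Lop q α f₁ x = 0)
    (h₂ : n = 0 ∨ ∀ x : Fin h → ℕ, (∑ i, x i) + 1 = n → Lop q α f₂ x = 0) :
    innerV q α N (RopIter q m (N - m) f₁) (RopIter q n (N - n) f₂) =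
      (if n = m then 1 else 0) * (q : ℂ) ^ (-(((N - n) * (N + n + 1) / 2 : ℕ) : ℤ)) *
        ((qPoch q q (N - n) : ℝ) : ℂ) *
        ((qPoch q (Apar α h * q ^ (2 * n + h)) (N - n) : ℝ) : ℂ) *
        innerV q α n f₁ f₂ := by
  have hα' : ∀ i, α i ≠ 0 := fun i => (hα i).ne'
  have hf₂ : ∀ x : Fin h → ℕ, (∑ i, x i) + 1 = n → Lop q α f₂ x = 0 :=
    h₂.elim (fun hn x hx => by omega) id
  obtain ⟨d, rfl⟩ := Nat.exists_eq_add_of_le hnm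
  obtain ⟨k, rfl⟩ := Nat.exists_eq_add_of_le hmN
  rw [Nat.add_sub_cancel_left, show n + d + k - n = d + k by omega,
    innerV_RopIter_RopIter hq0 hq1 hα' hf₂]
  rcases d with _ | d
  · have hprod := congrArg (fun t : ℝ => (t : ℂ)) (prod_normFactor (α := α) hq0.ne' n k)
    push_cast at hprod
    simp only [zero_add, add_zero, if_pos, one_mul, hprod, zpow_neg, zpow_natCast,
      show n + k + n + 1 = 2 * n + k + 1 by omega]
    simp [RopIter]
  · have hf₁ : ∀ x : Fin h → ℕ, (∑ i, x i) + 1 = n + d + 1 → Lop q α f₁ x = 0 :=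
      h₁.elim (fun hm x hx => by omega) id
    rw [if_neg (by omega), show innerV q α (n + (d + 1)) f₁ (RopIter q n (d + 1) f₂) = 0 from
      innerV_Rop_right_eq_zero hq0 hq1 hα' hf₁ _]
    simp

theorem stmt5 (q : ℝ) (hq0 : 0 < q) (hq1 : q < 1) (h : ℕ) (hh : 1 ≤ h)
    (α : Fin h → ℝ) (hα : ∀ i, 0 < α i) (n m N : ℕ) (hnm : n ≤ m) (hmN : m ≤ N)
    (f₁ f₂ : (Fin h → ℕ) → ℂ)
    (h₁ : m = 0 ∨ ∀ x : Fin h → ℕ, (∑ i, x i) + 1 = m → Lop q α f₁ x = 0)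
    (h₂ : n = 0 ∨ ∀ x : Fin h → ℕ, (∑ i, x i) + 1 = n → Lop q α f₂ x = 0) :
    innerV q α N (RopIter q m (N - m) f₁) (RopIter q n (N - n) f₂) =
      (if n = m then 1 else 0) * (q : ℂ) ^ (-(((N - n) * (N + n + 1) / 2 : ℕ) : ℤ)) *
        ((qPoch q q (N - n) : ℝ) : ℂ) *
        ((qPoch q (Apar α h * q ^ (2 * n + h)) (N - n) : ℝ) : ℂ) *
        innerV q α n f₁ f₂ :=
  stmt5_general q hq0 hq1 h α hα n m N hnm hmN f₁ f₂ h₁ h₂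

end
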